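/- For an Ornstein-Uhlenbeck operator P = (1/2)Tr(Q∇²_x) + ⟨Bx, ∇_x⟩, the quadratic symbol q(x,ξ) = (1/2)⟨Qξ,ξ⟩ − i⟨Bx,ξ⟩ of −P − (1/2)Tr(B) has nonnegative real part, and if the Kalman rank condition Rank[Q^{1/2}, BQ^{1/2}, ..., B^{n-1}Q^{1/2}] = n holds, then the singular space of q equals S = ℝⁿ_x × {0} ⊂ ℝⁿ_x × ℝⁿ_ξ. -/

import Mathlib

/-!
Along the Hamilton flow of `Im q` the fibre variable moves as `e^{tBᵀ}ξ`, so `Re q` along the flow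
is `t ↦ ½|R e^{tBᵀ}ξ|²` with `R = Q^{1/2}`. By the Leibniz rule its `k`-th derivative at `0` is
`½ ∑_{i+j=k} C(k,i) ⟨R (Bᵀ)^i ξ, R (Bᵀ)^j ξ⟩`. If all of these vanish, strong induction on `j`,
using the `2j`-th derivative, gives `R (Bᵀ)^j ξ = 0` for every `j`: `ξ` is orthogonal to the range
of the Kalman matrix, hence `ξ = 0` under the rank condition.
-/

open Matrix

/-- The Kalman matrix `[R, BR, ..., B^k R]`. -/
noncomputable def kalmanMatrix {n : ℕ} (R B : Matrix (Fin n) (Fin n) ℝ) (k : ℕ) :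
    Matrix (Fin n) (Fin (k + 1) × Fin n) ℝ :=
  fun i p => (B ^ (p.1 : ℕ) * R) i p.2

/-- The Weyl symbol `q(x,ξ) = (1/2)⟨Qξ,ξ⟩ − i⟨Bx,ξ⟩` of `−P − (1/2)Tr B`, where
`P = (1/2)Tr(Q∇²_x) + ⟨Bx,∇_x⟩` is the Ornstein-Uhlenbeck operator. -/
noncomputable def ouSymbol {n : ℕ} (Q B : Matrix (Fin n) (Fin n) ℝ)
    (x ξ : Fin n → ℝ) : ℂ :=
  ((1 / 2 : ℝ) * (ξ ⬝ᵥ Q.mulVec ξ) : ℝ) - Complex.I * ((B.mulVec x ⬝ᵥ ξ : ℝ) : ℂ)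

/-- `Re q` evaluated along the flow `e^{tH_{Im q}}` of the Hamilton vector field of
`Im q(x,ξ) = −⟨Bx,ξ⟩`, whose flow is `(x,ξ) ↦ (e^{−tB}x, e^{tBᵀ}ξ)`; since
`Re q(x,ξ) = (1/2)⟨Qξ,ξ⟩`, this is `(1/2)⟨Q e^{tBᵀ}ξ, e^{tBᵀ}ξ⟩`. -/
noncomputable def ouReAlongFlow {n : ℕ} (Q B : Matrix (Fin n) (Fin n) ℝ)
    (p : (Fin n → ℝ) × (Fin n → ℝ)) (t : ℝ) : ℝ :=
  (1 / 2) * (((NormedSpace.exp (t • Bᵀ)).mulVec p.2) ⬝ᵥ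
    Q.mulVec ((NormedSpace.exp (t • Bᵀ)).mulVec p.2))

open Finset

section Leibniz

variable {𝕜 E F G : Type*} [NontriviallyNormedField 𝕜] [NormedAddCommGroup E] [NormedSpace 𝕜 E]
  [NormedAddCommGroup F] [NormedSpace 𝕜 F] [NormedAddCommGroup G] [NormedSpace 𝕜 G]

theorem iteratedDeriv_eq_of_hasDerivAt_succ {u : ℕ → 𝕜 → F}
    (hu : ∀ k x, HasDerivAt (u k) (u (k + 1) x) x) (k : ℕ) : iteratedDeriv k (u 0) = u k := by
  induction k with
  | zero => exact iteratedDeriv_zero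
  | succ k ih => rw [iteratedDeriv_succ, ih]; exact funext fun x => (hu k x).deriv

theorem ContinuousLinearMap.iteratedDeriv_of_bilinear (β : E →L[𝕜] F →L[𝕜] G)
    {u : ℕ → 𝕜 → E} {v : ℕ → 𝕜 → F} (hu : ∀ k x, HasDerivAt (u k) (u (k + 1) x) x)
    (hv : ∀ k x, HasDerivAt (v k) (v (k + 1) x) x) (k : ℕ) :
    iteratedDeriv k (fun x => β (u 0 x) (v 0 x)) =
      fun x => ∑ ij ∈ antidiagonal k, k.choose ij.1 • β (u ij.1 x) (v ij.2 x) := by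
  let w : ℕ → 𝕜 → G := fun k x => ∑ ij ∈ antidiagonal k, k.choose ij.1 • β (u ij.1 x) (v ij.2 x)
  have hw : ∀ k x, HasDerivAt (w k) (w (k + 1) x) x := by
    intro k x
    have h : HasDerivAt (w k) (∑ ij ∈ antidiagonal k, k.choose ij.1 •
        (β (u ij.1 x) (v (ij.2 + 1) x) + β (u (ij.1 + 1) x) (v ij.2 x))) x :=
      HasDerivAt.fun_sum fun ij _ =>
        (β.hasDerivAt_of_bilinear (fun _ => hu ij.1 x) (fun _ => hv ij.2 x)).fun_const_smul _
    convert h using 1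
    rw [show w (k + 1) x = _ from
      sum_antidiagonal_choose_succ_nsmul (fun i j => β (u i x) (v j x)) k, ← sum_add_distrib]
    refine sum_congr rfl fun ij hij => ?_
    rw [Nat.choose_symm_of_eq_add (HasAntidiagonal.mem_antidiagonal.mp hij).symm, smul_add]
  simpa [w] using iteratedDeriv_eq_of_hasDerivAt_succ hw k

end Leibniz

section MatrixExp

open scoped Matrix.Norms.Operator

variable {𝕂 ι : Type*} [RCLike 𝕂] [Fintype ι] [DecidableEq ι]

theorem Matrix.hasDerivAt_exp_smul_mulVec (A : Matrix ι ι 𝕂) (v : ι → 𝕂) (t : 𝕂) :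
    HasDerivAt (fun s : 𝕂 => NormedSpace.exp (s • A) *ᵥ v)
      (NormedSpace.exp (t • A) *ᵥ (A *ᵥ v)) t := by
  let applyTo : Matrix ι ι 𝕂 →L[𝕂] ι → 𝕂 :=
    (LinearMap.applyₗ v ∘ₗ toLin'.toLinearMap).toContinuousLinearMap
  rw [mulVec_mulVec]
  exact applyTo.hasFDerivAt.comp_hasDerivAt t (hasDerivAt_exp_smul_const A t)

end MatrixExp

theorem iteratedDeriv_ouReAlongFlow_zero {n : ℕ} (Q B : Matrix (Fin n) (Fin n) ℝ)
    (p : (Fin n → ℝ) × (Fin n → ℝ)) (k : ℕ) :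
    iteratedDeriv k (ouReAlongFlow Q B p) 0 = 1 / 2 * ∑ ij ∈ antidiagonal k,
      k.choose ij.1 • ((Bᵀ ^ ij.1 *ᵥ p.2) ⬝ᵥ Q *ᵥ (Bᵀ ^ ij.2 *ᵥ p.2)) := by
  set u : ℕ → ℝ → Fin n → ℝ := fun k t => NormedSpace.exp (t • Bᵀ) *ᵥ (Bᵀ ^ k *ᵥ p.2)
  have hu : ∀ k t, HasDerivAt (u k) (u (k + 1) t) t := fun k t => by
    simpa [u, mulVec_mulVec, pow_succ'] using
      hasDerivAt_exp_smul_mulVec Bᵀ (Bᵀ ^ k *ᵥ p.2) t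
  have hf : ouReAlongFlow Q B p =
      fun t => 1 / 2 * (toBilin' Q).toContinuousBilinearMap (u 0 t) (u 0 t) := by
    ext t; simp [ouReAlongFlow, u, toBilin'_apply']
  rw [hf, iteratedDeriv_const_mul_field,
    ContinuousLinearMap.iteratedDeriv_of_bilinear _ hu hu]
  simp [u, toBilin'_apply']

theorem eq_zero_of_sum_antidiagonal_choose_dotProduct_eq_zero {R ι : Type*} [Fintype ι] [Ring R]
    [LinearOrder R] [IsStrictOrderedRing R] {w : ℕ → ι → R}
    (h : ∀ k, ∑ ij ∈ antidiagonal k, k.choose ij.1 • (w ij.1 ⬝ᵥ w ij.2) = 0) (j : ℕ) :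
    w j = 0 := by
  induction j using Nat.strong_induction_on with
  | _ j ih =>
  have hoff : ∀ ij ∈ antidiagonal (2 * j), ij ≠ (j, j) →
      (2 * j).choose ij.1 • (w ij.1 ⬝ᵥ w ij.2) = 0 := by
    rintro ⟨a, b⟩ hab hne
    rw [HasAntidiagonal.mem_antidiagonal] at hab
    rcases lt_or_ge a j with ha | ha
    · rw [ih a ha, zero_dotProduct, smul_zero]
    · have hb : b < j := by
        by_contra! hb
        exact hne (Prod.ext (by omega) (by omega))
      rw [ih b hb, dotProduct_zero, smul_zero]
  have hdiag := h (2 * j)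
  rw [sum_eq_single_of_mem (j, j) (HasAntidiagonal.mem_antidiagonal.mpr (two_mul j).symm) hoff]
    at hdiag
  exact dotProduct_self_eq_zero.mp
    ((smul_eq_zero.mp hdiag).resolve_left (Nat.choose_pos (by omega)).ne')

theorem Matrix.vecMul_injective_of_rank_eq_card {K m l : Type*} [Field K] [Fintype m]
    [Fintype l] {A : Matrix m l K} (h : A.rank = Fintype.card m) :
    Function.Injective fun v => v ᵥ* A :=
  vecMul_injective_iff.mpr <| linearIndependent_iff_card_eq_finrank_span.mpr <|
    h.symm.trans A.rank_eq_finrank_span_row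

theorem eq_zero_of_rank_kalmanMatrix_eq {n k : ℕ} {R B : Matrix (Fin n) (Fin n) ℝ}
    (hK : (kalmanMatrix R B k).rank = n) {ξ : Fin n → ℝ}
    (hξ : ∀ j ≤ k, Rᵀ *ᵥ (Bᵀ ^ j *ᵥ ξ) = 0) : ξ = 0 := by
  refine vecMul_injective_of_rank_eq_card (hK.trans (Fintype.card_fin n).symm) ?_
  simp only [zero_vecMul]
  funext ⟨j, c⟩
  have := congrFun (hξ j (Fin.is_le j)) c
  rwa [mulVec_mulVec, ← transpose_pow, ← transpose_mul, mulVec_transpose] at this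

namespace Matrix.PosSemidef

open scoped ComplexOrder

variable {𝕜 ι : Type*} [RCLike 𝕜] [Fintype ι] [DecidableEq ι] {Q : Matrix ι ι 𝕜}

noncomputable def spectralSqrt (hQ : Q.PosSemidef) : Matrix ι ι 𝕜 :=
  hQ.1.eigenvectorUnitary.1 * diagonal ((↑) ∘ (√·) ∘ hQ.1.eigenvalues) *
    (star hQ.1.eigenvectorUnitary : Matrix ι ι 𝕜)

theorem conjTranspose_spectralSqrt (hQ : Q.PosSemidef) : hQ.spectralSqrtᴴ = hQ.spectralSqrt := by
  have hdiag : star (((↑) ∘ (√·) ∘ hQ.1.eigenvalues : ι → 𝕜)) = (↑) ∘ (√·) ∘ hQ.1.eigenvalues :=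
    funext fun i => RCLike.conj_ofReal _
  rw [spectralSqrt, conjTranspose_mul, conjTranspose_mul, diagonal_conjTranspose, hdiag,
    ← star_eq_conjTranspose, ← star_eq_conjTranspose, star_star, mul_assoc]

theorem spectralSqrt_mul_self (hQ : Q.PosSemidef) : hQ.spectralSqrt * hQ.spectralSqrt = Q := by
  have hU : (star hQ.1.eigenvectorUnitary : Matrix ι ι 𝕜) * hQ.1.eigenvectorUnitary.1 = 1 :=
    Unitary.coe_star_mul_self _
  have hD : diagonal ((↑) ∘ (√·) ∘ hQ.1.eigenvalues) *
      diagonal ((↑) ∘ (√·) ∘ hQ.1.eigenvalues) =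
        diagonal (RCLike.ofReal ∘ hQ.1.eigenvalues : ι → 𝕜) := by
    rw [diagonal_mul_diagonal]
    congr 1
    funext i
    simp [← RCLike.ofReal_mul, Real.mul_self_sqrt (hQ.eigenvalues_nonneg i)]
  conv_rhs => rw [hQ.1.spectral_theorem, Unitary.conjStarAlgAut_apply, ← hD]
  simp only [spectralSqrt, mul_assoc]
  rw [← mul_assoc (star _ : Matrix ι ι 𝕜), hU, one_mul]

end Matrix.PosSemidef

theorem Matrix.dotProduct_transpose_mul_mulVec {α m l : Type*} [CommSemiring α] [Fintype m]
    [Fintype l] (R : Matrix m l α) (x y : l → α) :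
    x ⬝ᵥ (Rᵀ * R) *ᵥ y = (R *ᵥ x) ⬝ᵥ (R *ᵥ y) := by
  rw [← mulVec_mulVec, dotProduct_mulVec, vecMul_transpose]

theorem re_ouSymbol {n : ℕ} (Q B : Matrix (Fin n) (Fin n) ℝ) (x ξ : Fin n → ℝ) :
    (ouSymbol Q B x ξ).re = 1 / 2 * (ξ ⬝ᵥ Q *ᵥ ξ) := by
  simp [ouSymbol]

/-- the quadratic symbol `q(x,ξ) = (1/2)⟨Qξ,ξ⟩ − i⟨Bx,ξ⟩` of
`−P − (1/2)Tr B` has nonnegative real part, and if the Kalman rank condition holds, the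
singular space `S = {X ∈ ℝ²ⁿ : (H_{Im q}^k Re q)(X) = 0 ∀ k ≥ 0}`, i.e. the set of points
where `Re q` vanishes to infinite order along the flow of `H_{Im q}`, equals
`ℝⁿ_x × {0} ⊆ ℝⁿ_x × ℝⁿ_ξ`. -/
theorem stmt16 {n : ℕ} (Q B : Matrix (Fin n) (Fin n) ℝ) (hQ : Q.PosSemidef) :
    (∀ x ξ : Fin n → ℝ, 0 ≤ (ouSymbol Q B x ξ).re) ∧
    ((kalmanMatrix (hQ.1.eigenvectorUnitary.1 *
        diagonal ((↑) ∘ (√·) ∘ hQ.1.eigenvalues) *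
        (star hQ.1.eigenvectorUnitary : Matrix (Fin n) (Fin n) ℝ)) B (n - 1)).rank = n →
      {p : (Fin n → ℝ) × (Fin n → ℝ) | ∀ k : ℕ,
          iteratedDeriv k (ouReAlongFlow Q B p) 0 = 0} =
        {p : (Fin n → ℝ) × (Fin n → ℝ) | p.2 = 0}) := by
  refine ⟨fun x ξ => ?_, fun hK => ?_⟩
  · rw [re_ouSymbol]
    have := hQ.dotProduct_mulVec_nonneg ξ
    positivity
  set R := hQ.spectralSqrt
  have hR : Rᵀ = R := hQ.conjTranspose_spectralSqrt
  have hQR : Q = Rᵀ * R := by rw [hR, hQ.spectralSqrt_mul_self]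
  ext p
  refine ⟨fun h => ?_, fun h k => ?_⟩
  · have hw := eq_zero_of_sum_antidiagonal_choose_dotProduct_eq_zero
      (w := fun j => R *ᵥ (Bᵀ ^ j *ᵥ p.2)) fun k => by
        have hk := h k
        rw [iteratedDeriv_ouReAlongFlow_zero, hQR] at hk
        simp_rw [dotProduct_transpose_mul_mulVec] at hk
        simpa using hk
    exact eq_zero_of_rank_kalmanMatrix_eq hK fun j _ => hR ▸ hw j
  · simp [iteratedDeriv_ouReAlongFlow_zero, show p.2 = 0 from h]
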